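/- Let X_1,...,X_k ∈ ℝ^d and suppose ν and ν' are both (γ, λ)-combinatorial centers of X_1,...,X_k with γ < 1/2. Then ‖ν − ν'‖₂ ≤ 2√λ. -/
import Mathlib


open scoped RealInnerProductSpace Classical

/-- ν is a (γ, λ)-combinatorial center of Y₁,...,Y_k: for every unit vector v, the
number of indices i with ⟨Y i − ν, v⟩ ≥ √λ is at most γk. -/
def IsCombCenter {d k : ℕ} (Y : Fin k → EuclideanSpace ℝ (Fin d))
    (ν : EuclideanSpace ℝ (Fin d)) (γ lam : ℝ) : Prop :=
  ∀ v : EuclideanSpace ℝ (Fin d), ‖v‖ = 1 →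
    ((Finset.univ.filter fun i => Real.sqrt lam ≤ ⟪Y i - ν, v⟫).card : ℝ) ≤ γ * k

/-- two (γ, λ)-combinatorial centers with γ < 1/2 are within 2√λ. -/
theorem combCenters_close
    (d k : ℕ) (hk : 0 < k) (γ lam : ℝ) (hγ : γ < 1/2)
    (Y : Fin k → EuclideanSpace ℝ (Fin d)) (ν ν' : EuclideanSpace ℝ (Fin d))
    (h : IsCombCenter Y ν γ lam) (h' : IsCombCenter Y ν' γ lam) :
    ‖ν - ν'‖ ≤ 2 * Real.sqrt lam := by
  by_contra hcon
  push_neg at hcon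
  have hne : ν' - ν ≠ 0 := by
    intro h0
    have : ν - ν' = 0 := by
      have := congrArg Neg.neg h0
      simpa [neg_sub] using this
    rw [this] at hcon
    simp at hcon
    have := Real.sqrt_nonneg lam
    linarith [hcon]
  have hnorm : (0:ℝ) < ‖ν' - ν‖ := norm_pos_iff.mpr hne
  set v : EuclideanSpace ℝ (Fin d) := ‖ν' - ν‖⁻¹ • (ν' - ν) with hv
  have hvnorm : ‖v‖ = 1 := by
    rw [hv, norm_smul, norm_inv, norm_norm, inv_mul_cancel₀ hnorm.ne']
  have hvnorm' : ‖-v‖ = 1 := by rwa [norm_neg]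
  have h1 := h v hvnorm
  have h2 := h' (-v) hvnorm'
  have hbig : 2 * Real.sqrt lam < ⟪ν' - ν, v⟫ := by
    rw [hv, real_inner_smul_right, real_inner_self_eq_norm_sq]
    rw [show ‖ν' - ν‖ = ‖ν - ν'‖ from (norm_sub_rev _ _)] at hnorm ⊢
    rw [sq]
    rw [inv_mul_cancel_left₀ hnorm.ne']
    exact hcon
  -- each i belongs to one of the two sets
  have hcover : (Finset.univ : Finset (Fin k)) ⊆
      (Finset.univ.filter fun i => Real.sqrt lam ≤ ⟪Y i - ν, v⟫) ∪
      (Finset.univ.filter fun i => Real.sqrt lam ≤ ⟪Y i - ν', -v⟫) := by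
    intro i _
    simp only [Finset.mem_union, Finset.mem_filter, Finset.mem_univ, true_and]
    by_contra hcontra
    push_neg at hcontra
    obtain ⟨ha, hb⟩ := hcontra
    have hsum : ⟪Y i - ν, v⟫ + ⟪Y i - ν', -v⟫ = ⟪ν' - ν, v⟫ := by
      rw [inner_neg_right]
      rw [← sub_eq_add_neg, ← inner_sub_left]
      congr 1
      abel
    linarith
  have hk' : (k:ℝ) ≤ 2 * γ * k := by
    have hcard : (k:ℝ) ≤
        ((Finset.univ.filter fun i => Real.sqrt lam ≤ ⟪Y i - ν, v⟫).card : ℝ) +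
        ((Finset.univ.filter fun i => Real.sqrt lam ≤ ⟪Y i - ν', -v⟫).card : ℝ) := by
      have := Finset.card_le_card hcover
      have := le_trans this (Finset.card_union_le _ _)
      calc (k:ℝ) = ((Finset.univ : Finset (Fin k)).card : ℝ) := by simp
        _ ≤ _ := by exact_mod_cast this
    linarith
  have hkpos : (0:ℝ) < k := by exact_mod_cast hk
  nlinarith
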